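/- Let q ≥ 2 be a real number, v(s) := (1/q − 1/2)((π−s)/π)³ + (1/q)(s−π)/π + 1/2, and w(s) := 2π v(s)^q / (v(s)^q + v(2π−s)^q). Then w is strictly increasing on [0,2π]: for 0 ≤ s < t ≤ 2π one has w(s) < w(t). In particular w maps [0,2π] bijectively onto [0,2π], so it is a valid reparametrization of a boundary segment. -/

import Mathlib

open Real

/-- The Kress grading auxiliary function
`v(s) = (1/q − 1/2)((π−s)/π)³ + (1/q)(s−π)/π + 1/2`. -/
noncomputable def kressV (q : ℝ) (s : ℝ) : ℝ :=
  (1 / q - 1 / 2) * ((π - s) / π) ^ 3 + (1 / q) * (s - π) / π + 1 / 2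

/-- The Kress corner-grading function `w(s) = 2π v(s)^q / (v(s)^q + v(2π−s)^q)`,
where `v(s)^q` is the real power of `v(s)`. -/
noncomputable def kressW (q : ℝ) (s : ℝ) : ℝ :=
  2 * π * kressV q s ^ q / (kressV q s ^ q + kressV q (2 * π - s) ^ q)

/-!
Since `v(2π - s) = 1 - v(s)`, the grading function factors as `w = 2π · r ∘ v` with
`r(u) = u^q / (u^q + (1 - u)^q)`. For `q ≥ 2` the cubic `v` is strictly increasing with
`v(0) = 0`, `v(2π) = 1`, and `r` is strictly increasing on `[0, 1]` because
`r(u) < r(u')` amounts to `u^q (1 - u')^q < u'^q (1 - u)^q`. A continuous strictly increasing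
map of `[0, 2π]` fixing both endpoints is a bijection onto `[0, 2π]`.
-/

lemma kressV_two_pi_sub (q s : ℝ) : kressV q (2 * π - s) = 1 - kressV q s := by
  unfold kressV
  field_simp [pi_ne_zero]
  ring

lemma kressV_zero (q : ℝ) : kressV q 0 = 0 := by
  unfold kressV
  field_simp [pi_ne_zero]
  ring

lemma kressV_two_pi (q : ℝ) : kressV q (2 * π) = 1 := by
  simpa [kressV_zero] using kressV_two_pi_sub q 0

lemma kressV_strictMono {q : ℝ} (hq : 2 ≤ q) : StrictMono (kressV q) := by
  intro s t hst
  have hinv_pos : 0 < 1 / q := by positivity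
  have hcube_coeff : 0 ≤ 1 / 2 - 1 / q := by
    have : 1 / q ≤ 1 / 2 := one_div_le_one_div_of_le (by norm_num) hq
    linarith
  have hv : ∀ x, kressV q x =
      (1 / 2 - 1 / q) * ((x - π) / π) ^ 3 + 1 / q * ((x - π) / π) + 1 / 2 := by
    intro x
    unfold kressV
    ring
  have hlin : (s - π) / π < (t - π) / π := div_lt_div_of_pos_right (by linarith) pi_pos
  have hcube := Odd.strictMono_pow (by decide : Odd 3) hlin
  rw [hv, hv]
  nlinarith [mul_le_mul_of_nonneg_left hcube.le hcube_coeff, mul_lt_mul_of_pos_left hlin hinv_pos]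

lemma kressV_mapsTo {q : ℝ} (hq : 2 ≤ q) :
    Set.MapsTo (kressV q) (Set.Icc 0 (2 * π)) (Set.Icc 0 1) := by
  intro s hs
  have hv := (kressV_strictMono hq).monotone
  exact ⟨kressV_zero q ▸ hv hs.1, kressV_two_pi q ▸ hv hs.2⟩

lemma rpow_add_one_sub_rpow_pos {q u : ℝ} (hu : u ∈ Set.Icc (0 : ℝ) 1) :
    0 < u ^ q + (1 - u) ^ q := by
  rcases hu.1.eq_or_lt with rfl | hu0
  · simpa using add_pos_of_nonneg_of_pos (rpow_nonneg le_rfl q) zero_lt_one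
  · exact add_pos_of_pos_of_nonneg (rpow_pos_of_pos hu0 q) (rpow_nonneg (by linarith [hu.2]) q)

noncomputable def kressRatio (q u : ℝ) : ℝ :=
  u ^ q / (u ^ q + (1 - u) ^ q)

lemma kressRatio_zero {q : ℝ} (hq : q ≠ 0) : kressRatio q 0 = 0 := by
  simp [kressRatio, zero_rpow hq]

lemma kressRatio_one {q : ℝ} (hq : q ≠ 0) : kressRatio q 1 = 1 := by
  simp [kressRatio, zero_rpow hq]

lemma kressRatio_strictMonoOn {q : ℝ} (hq : 0 < q) :
    StrictMonoOn (kressRatio q) (Set.Icc 0 1) := by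
  intro a ha b hb hab
  have hpow : a ^ q < b ^ q := rpow_lt_rpow ha.1 hab hq
  have hcross : a ^ q * (1 - b) ^ q < b ^ q * (1 - a) ^ q := by
    rw [mul_comm, mul_comm (b ^ q)]
    exact mul_lt_mul' (rpow_le_rpow (by linarith [hb.2]) (by linarith) hq.le) hpow
      (rpow_nonneg ha.1 q) (rpow_pos_of_pos (by linarith [hb.2]) q)
  rw [kressRatio, kressRatio,
    div_lt_div_iff₀ (rpow_add_one_sub_rpow_pos ha) (rpow_add_one_sub_rpow_pos hb)]
  linarith

lemma kressRatio_continuousOn {q : ℝ} (hq : 0 ≤ q) :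
    ContinuousOn (kressRatio q) (Set.Icc 0 1) := by
  have hpow : Continuous fun u : ℝ => u ^ q := continuous_id.rpow_const fun _ => Or.inr hq
  have hpow' : Continuous fun u : ℝ => (1 - u) ^ q :=
    (continuous_const.sub continuous_id).rpow_const fun _ => Or.inr hq
  exact hpow.continuousOn.div (hpow.add hpow').continuousOn
    fun u hu => (rpow_add_one_sub_rpow_pos hu).ne'

lemma kressW_eq (q s : ℝ) : kressW q s = 2 * π * kressRatio q (kressV q s) := by
  rw [kressW, kressRatio, kressV_two_pi_sub, mul_div_assoc]

lemma kressW_zero {q : ℝ} (hq : q ≠ 0) : kressW q 0 = 0 := by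
  rw [kressW_eq, kressV_zero, kressRatio_zero hq, mul_zero]

lemma kressW_two_pi {q : ℝ} (hq : q ≠ 0) : kressW q (2 * π) = 2 * π := by
  rw [kressW_eq, kressV_two_pi, kressRatio_one hq, mul_one]

lemma kressW_strictMonoOn {q : ℝ} (hq : 2 ≤ q) :
    StrictMonoOn (kressW q) (Set.Icc 0 (2 * π)) := by
  intro s hs t ht hst
  rw [kressW_eq, kressW_eq]
  have hratio := kressRatio_strictMonoOn (by linarith : (0 : ℝ) < q)
  exact mul_lt_mul_of_pos_left
    (hratio (kressV_mapsTo hq hs) (kressV_mapsTo hq ht) (kressV_strictMono hq hst)) (by positivity)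

lemma kressW_continuousOn {q : ℝ} (hq : 2 ≤ q) :
    ContinuousOn (kressW q) (Set.Icc 0 (2 * π)) := by
  have hv : Continuous (kressV q) := by unfold kressV; fun_prop
  have hcomp := (kressRatio_continuousOn (by linarith : (0 : ℝ) ≤ q)).comp hv.continuousOn
    (kressV_mapsTo hq)
  rw [show kressW q = fun s => 2 * π * kressRatio q (kressV q s) from funext (kressW_eq q)]
  exact continuousOn_const.mul hcomp

/-- For real `q ≥ 2`, the Kress grading function `w` is strictly increasing on `[0, 2π]`:
for `0 ≤ s < t ≤ 2π` one has `w(s) < w(t)`.  In particular `w` maps `[0, 2π]` bijectively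
onto `[0, 2π]`, so it is a valid reparametrization of a boundary segment. -/
theorem kressW_strictMono_bijective (q : ℝ) (hq : 2 ≤ q) :
    StrictMonoOn (kressW q) (Set.Icc 0 (2 * π)) ∧
      Set.BijOn (kressW q) (Set.Icc 0 (2 * π)) (Set.Icc 0 (2 * π)) := by
  have hq0 : q ≠ 0 := by linarith
  have hmono := kressW_strictMonoOn hq
  have himage : kressW q '' Set.Icc 0 (2 * π) = Set.Icc 0 (2 * π) := by
    rw [(kressW_continuousOn hq).image_Icc_of_monotoneOn (by positivity) hmono.monotoneOn,
      kressW_zero hq0, kressW_two_pi hq0]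
  refine ⟨hmono, ?_⟩
  simpa only [himage] using hmono.injOn.bijOn_image
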